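/- For fixed α ∈ (0,1), ρ, d > 0, and T > 0, the function K ↦ τ(K) = ρ²d⁴KN / (ρ²d⁴K(K - αT) + t(K)²), where t(K) = √((1-α)(ρd²K + α)) + √(α(ρd²K + 1-α)), has setting its derivative to zero equivalent to f(ρd²K) = 0, where f(x) = -x² - x√(α - α²)(√((x+α)/(x+1-α)) + √((x+1-α)/(x+α))) + 2√((α-α²)(x+α)(x+1-α)) + 2(α - α²). -/

import Mathlib

/-- `t(K) = √((1-α)(ρd²K+α)) + √(α(ρd²K+1-α))`. -/
noncomputable def tAux (α ρ d K : ℝ) : ℝ :=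
  Real.sqrt ((1 - α) * (ρ * d ^ 2 * K + α)) + Real.sqrt (α * (ρ * d ^ 2 * K + 1 - α))

/-- The effective SNR `τ(K) = ρ²d⁴KN / (ρ²d⁴K(K-αT) + t(K)²)`. -/
noncomputable def tauUser (α T ρ d Nr K : ℝ) : ℝ :=
  ρ ^ 2 * d ^ 4 * K * Nr / (ρ ^ 2 * d ^ 4 * K * (K - α * T) + (tAux α ρ d K) ^ 2)

/-- The function `f` of equation (44) characterizing the optimal user number. -/
noncomputable def fOpt (α x : ℝ) : ℝ :=
  -x ^ 2 -
    x * Real.sqrt (α - α ^ 2) *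
      (Real.sqrt ((x + α) / (x + 1 - α)) + Real.sqrt ((x + 1 - α) / (x + α))) +
    2 * Real.sqrt ((α - α ^ 2) * (x + α) * (x + 1 - α)) + 2 * (α - α ^ 2)
/-!
The `αT` terms cancel from the numerator of the quotient rule, which becomes `t² - x² - 2K t t'`
with `x = ρd²K`. Writing `t = √(1-α)√(x+α) + √α√(x+1-α)`, one finds
`t² = x + 2(α-α²) + 2√((α-α²)(x+α)(x+1-α))` and
`2K t t' = x (1 + √(α-α²) (√((x+α)/(x+1-α)) + √((x+1-α)/(x+α))))`, so that numerator is `f(x)`.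
-/
open Real

theorem hasDerivAt_linear_div_quadratic_add {B N s K h' : ℝ} {h : ℝ → ℝ}
    (hh : HasDerivAt h h' K) (hD : B * K * (K - s) + h K ≠ 0) :
    HasDerivAt (fun y => B * y * N / (B * y * (y - s) + h y))
      (B * N * (h K - B * K ^ 2 - K * h') / (B * K * (K - s) + h K) ^ 2) K := by
  have hnum : HasDerivAt (fun y => B * y * N) (B * N) K :=
    (((hasDerivAt_id' K).const_mul B).mul_const N).congr_deriv (by ring)
  have hden : HasDerivAt (fun y => B * y * (y - s) + h y) (B * (2 * K - s) + h') K :=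
    ((((hasDerivAt_id' K).const_mul B).mul ((hasDerivAt_id' K).sub_const s)).add hh).congr_deriv
      (by ring)
  exact (hnum.div hden hD).congr_deriv (by ring)

theorem hasDerivAt_sqrt_affine {c e K : ℝ} (h : 0 < c * K + e) :
    HasDerivAt (fun y => √(c * y + e)) (c / (2 * √(c * K + e))) K :=
  (((hasDerivAt_id' K).const_mul c).add_const e).sqrt h.ne' |>.congr_deriv (by ring)

theorem tAux_eq {α : ℝ} (hα : α ∈ Set.Icc (0 : ℝ) 1) (ρ d K : ℝ) :
    tAux α ρ d K =
      √(1 - α) * √(ρ * d ^ 2 * K + α) + √α * √(ρ * d ^ 2 * K + (1 - α)) := by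
  rw [tAux, sqrt_mul (by linarith [hα.2]), sqrt_mul hα.1, add_sub_assoc]

theorem tAux_pos {α ρ d K : ℝ} (hα : α ∈ Set.Ioo (0 : ℝ) 1) (hx : 0 ≤ ρ * d ^ 2 * K) :
    0 < tAux α ρ d K := by
  rw [tAux_eq (Set.Ioo_subset_Icc_self hα)]
  have hα0 : 0 < α := hα.1
  have h1α : 0 < 1 - α := by linarith [hα.2]
  positivity

noncomputable def tAuxDeriv (α ρ d K : ℝ) : ℝ :=
  ρ * d ^ 2 * (√(1 - α) / (2 * √(ρ * d ^ 2 * K + α)) + √α / (2 * √(ρ * d ^ 2 * K + (1 - α))))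

theorem hasDerivAt_tAux {α ρ d K : ℝ} (hα : α ∈ Set.Ioo (0 : ℝ) 1) (hx : 0 ≤ ρ * d ^ 2 * K) :
    HasDerivAt (tAux α ρ d) (tAuxDeriv α ρ d K) K := by
  have ha := hasDerivAt_sqrt_affine (c := ρ * d ^ 2) (e := α) (K := K) (by linarith [hα.1])
  have hb := hasDerivAt_sqrt_affine (c := ρ * d ^ 2) (e := 1 - α) (K := K) (by linarith [hα.2])
  rw [funext (tAux_eq (Set.Ioo_subset_Icc_self hα) ρ d)]
  exact ((ha.const_mul √(1 - α)).add (hb.const_mul √α)).congr_deriv (by rw [tAuxDeriv]; ring)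

theorem tAux_sq_sub_sub_eq_fOpt {α ρ d K : ℝ} (hα : α ∈ Set.Ioo (0 : ℝ) 1)
    (hx : 0 ≤ ρ * d ^ 2 * K) :
    tAux α ρ d K ^ 2 - ρ ^ 2 * d ^ 4 * K ^ 2 - K * (2 * tAux α ρ d K * tAuxDeriv α ρ d K) =
      fOpt α (ρ * d ^ 2 * K) := by
  obtain ⟨hα0, hα1⟩ := hα
  have h1α : 0 < 1 - α := by linarith
  have hxa : 0 < ρ * d ^ 2 * K + α := by linarith
  have hxb : 0 < ρ * d ^ 2 * K + (1 - α) := by linarith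
  have hαα : α - α ^ 2 = α * (1 - α) := by ring
  rw [tAux_eq ⟨hα0.le, hα1.le⟩, tAuxDeriv, fOpt, add_sub_assoc, hαα, mul_assoc (α * (1 - α)),
    sqrt_mul (by positivity : 0 ≤ α * (1 - α)), sqrt_mul hα0.le, sqrt_mul hxa.le,
    sqrt_div hxa.le, sqrt_div hxb.le]
  set a := √(ρ * d ^ 2 * K + α)
  set b := √(ρ * d ^ 2 * K + (1 - α))
  set p := √α
  set q := √(1 - α)
  have ha : a ^ 2 = ρ * d ^ 2 * K + α := sq_sqrt hxa.le
  have hb : b ^ 2 = ρ * d ^ 2 * K + (1 - α) := sq_sqrt hxb.le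
  have hp : p ^ 2 = α := sq_sqrt hα0.le
  have hq : q ^ 2 = 1 - α := sq_sqrt h1α.le
  have ha0 : a ≠ 0 := (sqrt_pos.2 hxa).ne'
  have hb0 : b ≠ 0 := (sqrt_pos.2 hxb).ne'
  field_simp
  linear_combination a * b * (q ^ 2 * ha + p ^ 2 * hb + α * hq + (1 - α) * hp)

/-- For `K ≥ αT`, the stationarity condition `dτ/dK = 0` is equivalent to `f(ρd²K) = 0`. -/
theorem deriv_tauUser_eq_zero_iff (α T ρ d Nr : ℝ) (hα : α ∈ Set.Ioo (0 : ℝ) 1)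
    (hT : 0 < T) (hρ : 0 < ρ) (hd : 0 < d) (hN : 0 < Nr) :
    ∀ K : ℝ, α * T ≤ K →
      (deriv (tauUser α T ρ d Nr) K = 0 ↔ fOpt α (ρ * d ^ 2 * K) = 0) := by
  intro K hK
  have hK0 : 0 < K := (mul_pos hα.1 hT).trans_le hK
  have hx : 0 ≤ ρ * d ^ 2 * K := by positivity
  have hD : 0 < ρ ^ 2 * d ^ 4 * K * (K - α * T) + tAux α ρ d K ^ 2 := by
    have := tAux_pos hα hx
    have : 0 ≤ K - α * T := sub_nonneg.2 hK
    positivity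
  have htSq : HasDerivAt (fun y => tAux α ρ d y ^ 2)
      (2 * tAux α ρ d K * tAuxDeriv α ρ d K) K :=
    ((hasDerivAt_tAux hα hx).pow 2).congr_deriv (by ring)
  have hτ : HasDerivAt (tauUser α T ρ d Nr) _ K :=
    hasDerivAt_linear_div_quadratic_add (N := Nr) htSq hD.ne'
  rw [hτ.deriv, div_eq_zero_iff, or_iff_left (pow_pos hD 2).ne', mul_eq_zero,
    or_iff_right (by positivity), tAux_sq_sub_sub_eq_fOpt hα hx]
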